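/- Let Ω ⊆ ℝ³ be open, let u : Ω → ℝ³ be continuously differentiable with div u = 0 on Ω, and let v : Ω → ℝ³ be twice continuously differentiable. Set ω := curl v. Then on Ω, div(ω ⊗ u) − ω·∇u = curl(u·∇v − (∇v)ᵀu), where (u·∇v)ⁱ = ∑_k uᵏ ∂_k vⁱ and ((∇v)ᵀu)ⁱ = ∑_k uᵏ ∂ᵢvᵏ. -/

import Mathlib

/-! The field `u·∇v − (∇v)ᵀu` is pointwise `ω × u`. The product rule gives
`curl (ω × u) = ω div u − u div ω + (u·∇)ω − (ω·∇)u` and `div (ω ⊗ u) = ω div u + (u·∇)ω`,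
and `div ω = div curl v = 0` by the symmetry of the second derivatives of `v`. -/

noncomputable section

local notation "E3" => EuclideanSpace ℝ (Fin 3)

/-- The partial derivative `∂_k f` of a scalar field `f : ℝ³ → ℝ` at `x`. -/
noncomputable def pd (f : E3 → ℝ) (k : Fin 3) (x : E3) : ℝ :=
  fderiv ℝ f x (EuclideanSpace.single k 1)

/-- Divergence of a vector field `v : ℝ³ → ℝ³` at `x`: `div v = ∑ᵢ ∂ᵢvⁱ`. -/
noncomputable def div3 (v : E3 → E3) (x : E3) : ℝ :=
  ∑ i : Fin 3, pd (fun y => v y i) i x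

/-- Curl of a vector field `v : ℝ³ → ℝ³` at `x` (with `0`-based indices):
`curl v = (∂₁v² − ∂₂v¹, ∂₂v⁰ − ∂₀v², ∂₀v¹ − ∂₁v⁰)`. -/
noncomputable def curl3 (v : E3 → E3) (x : E3) : E3 :=
  (WithLp.equiv 2 (Fin 3 → ℝ)).symm
    ![pd (fun y => v y 2) 1 x - pd (fun y => v y 1) 2 x,
      pd (fun y => v y 0) 2 x - pd (fun y => v y 2) 0 x,
      pd (fun y => v y 1) 0 x - pd (fun y => v y 0) 1 x]

open Matrix

section PartialDerivatives

variable {f g : E3 → ℝ} {x : E3}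

lemma pd_mul (hf : DifferentiableAt ℝ f x) (hg : DifferentiableAt ℝ g x) (k : Fin 3) :
    pd (fun y => f y * g y) k x = f x * pd g k x + g x * pd f k x := by
  simp [pd, fderiv_fun_mul hf hg]

lemma pd_sub (hf : DifferentiableAt ℝ f x) (hg : DifferentiableAt ℝ g x) (k : Fin 3) :
    pd (fun y => f y - g y) k x = pd f k x - pd g k x := by
  simp [pd, fderiv_fun_sub hf hg]

lemma differentiableAt_pd (hf : ContDiffAt ℝ 2 f x) (k : Fin 3) :
    DifferentiableAt ℝ (pd f k) x :=
  ((hf.fderiv_right (m := 1) (by norm_num)).differentiableAt (by norm_num)).clm_apply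
    (differentiableAt_const _)

lemma pd_pd_eq_fderiv_fderiv (hf : ContDiffAt ℝ 2 f x) (k m : Fin 3) :
    pd (pd f k) m x
      = fderiv ℝ (fderiv ℝ f) x (EuclideanSpace.single m 1) (EuclideanSpace.single k 1) := by
  have hdf := (hf.fderiv_right (m := 1) (by norm_num)).differentiableAt (by norm_num)
  change fderiv ℝ (fun y => fderiv ℝ f y (EuclideanSpace.single k 1)) x _ = _
  simp [fderiv_clm_apply hdf (differentiableAt_const _)]

lemma pd_pd_comm (hf : ContDiffAt ℝ 2 f x) (k m : Fin 3) :
    pd (pd f k) m x = pd (pd f m) k x := by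
  rw [pd_pd_eq_fderiv_fderiv hf, pd_pd_eq_fderiv_fderiv hf, hf.isSymmSndFDerivAt (by simp)]

end PartialDerivatives

def cross3 (a b : E3) : E3 :=
  WithLp.toLp 2 (WithLp.ofLp a ⨯₃ WithLp.ofLp b)

section VectorCalculus

variable {a b u v : E3 → E3} {x : E3}

lemma convective_sub_transpose_eq_curl3_cross (y : E3) :
    (WithLp.equiv 2 (Fin 3 → ℝ)).symm
        (fun j => (∑ k : Fin 3, u y k * pd (fun z => v z j) k y)
          - ∑ k : Fin 3, u y k * pd (fun z => v z k) j y)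
      = cross3 (curl3 v y) (u y) := by
  ext j
  fin_cases j <;> simp [curl3, cross3, cross_apply, Fin.sum_univ_three] <;> ring

lemma curl3_cross (ha : ∀ j, DifferentiableAt ℝ (fun y => a y j) x)
    (hb : ∀ j, DifferentiableAt ℝ (fun y => b y j) x) (i : Fin 3) :
    curl3 (fun y => cross3 (a y) (b y)) x i
      = a x i * div3 b x - b x i * div3 a x
        + ∑ k : Fin 3, b x k * pd (fun y => a y i) k x
        - ∑ k : Fin 3, a x k * pd (fun y => b y i) k x := by
  fin_cases i <;>
    simp (disch := fun_prop) [curl3, cross3, cross_apply, div3, Fin.sum_univ_three, pd_sub, pd_mul] <;>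
    ring

lemma sum_pd_mul_apply (ha : ∀ j, DifferentiableAt ℝ (fun y => a y j) x)
    (hb : ∀ j, DifferentiableAt ℝ (fun y => b y j) x) (i : Fin 3) :
    ∑ k : Fin 3, pd (fun y => a y i * b y k) k x
      = a x i * div3 b x + ∑ k : Fin 3, b x k * pd (fun y => a y i) k x := by
  simp [div3, pd_mul (ha i) (hb _), Finset.sum_add_distrib, Finset.mul_sum]

lemma differentiableAt_curl3_apply (hv : ContDiffAt ℝ 2 v x) (i : Fin 3) :
    DifferentiableAt ℝ (fun y => curl3 v y i) x := by
  have hpd := fun j k => differentiableAt_pd (contDiffAt_euclidean.1 hv j) k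
  fin_cases i <;> simp [curl3] <;> fun_prop

lemma div3_curl3 (hv : ContDiffAt ℝ 2 v x) : div3 (curl3 v) x = 0 := by
  have hvj := fun j => contDiffAt_euclidean.1 hv j
  have hpd := fun j k => differentiableAt_pd (hvj j) k
  simp only [div3, curl3, WithLp.equiv_symm_apply, Fin.sum_univ_three, cons_val_zero,
    cons_val_one, cons_val, pd_sub, hpd]
  rw [pd_pd_comm (hvj 2) 1 0, pd_pd_comm (hvj 1) 2 0, pd_pd_comm (hvj 0) 2 1]
  ring

end VectorCalculus

theorem div_tensor_minus_stretching_eq_curl_general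
    (Ω : Set E3) (hΩ : IsOpen Ω)
    (u v : E3 → E3)
    (hu : ContDiffOn ℝ 1 u Ω)
    (hv : ContDiffOn ℝ 2 v Ω) :
    ∀ x ∈ Ω, ∀ i : Fin 3,
      (∑ k : Fin 3, pd (fun y => curl3 v y i * u y k) k x)
        - (∑ k : Fin 3, curl3 v x k * pd (fun y => u y i) k x)
      = curl3
          (fun y => (WithLp.equiv 2 (Fin 3 → ℝ)).symm
            (fun j => (∑ k : Fin 3, u y k * pd (fun z => v z j) k y)
              - ∑ k : Fin 3, u y k * pd (fun z => v z k) j y))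
          x i := by
  intro x hx i
  have hvx : ContDiffAt ℝ 2 v x := hv.contDiffAt (hΩ.mem_nhds hx)
  have hux : ∀ k, DifferentiableAt ℝ (fun y => u y k) x :=
    differentiableAt_euclidean.1 ((hu.contDiffAt (hΩ.mem_nhds hx)).differentiableAt one_ne_zero)
  have hω := differentiableAt_curl3_apply hvx
  simp only [convective_sub_transpose_eq_curl3_cross]
  rw [sum_pd_mul_apply hω hux, curl3_cross hω hux, div3_curl3 hvx]
  ring

/-- For `u` continuously differentiable and divergence-free on an open set `Ω` and `v`
twice continuously differentiable on `Ω`, with `ω := curl v`, one has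
`div(ω ⊗ u) − ω·∇u = curl(u·∇v − (∇v)ᵀu)` componentwise on `Ω`. -/
theorem div_tensor_minus_stretching_eq_curl
    (Ω : Set E3) (hΩ : IsOpen Ω)
    (u v : E3 → E3)
    (hu : ContDiffOn ℝ 1 u Ω)
    (hdiv : ∀ x ∈ Ω, div3 u x = 0)
    (hv : ContDiffOn ℝ 2 v Ω) :
    ∀ x ∈ Ω, ∀ i : Fin 3,
      (∑ k : Fin 3, pd (fun y => curl3 v y i * u y k) k x)
        - (∑ k : Fin 3, curl3 v x k * pd (fun y => u y i) k x)
      = curl3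
          (fun y => (WithLp.equiv 2 (Fin 3 → ℝ)).symm
            (fun j => (∑ k : Fin 3, u y k * pd (fun z => v z j) k y)
              - ∑ k : Fin 3, u y k * pd (fun z => v z k) j y))
          x i :=
  div_tensor_minus_stretching_eq_curl_general Ω hΩ u v hu hv
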